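/- arXiv:2202.00576 — 3 statements merged into one kernel-verified Lean document; each statement's English description precedes it below -/
import Mathlib

section
/- The bar state ū = (u_L + u_R)/2 + (f(u_L) - f(u_R))/(2λ) lies in any convex invariant set containing both one-sided exact Riemann averages; in the scalar case with Lipschitz flux f and λ ≥ Lip(f), the bar state satisfies min(u_L, u_R) ≤ ū ≤ max(u_L, u_R). -/
/-- Bar state maximum principle in the scalar case: for a Lipschitz flux `f`
with constant `L` and wavespeed `λ ≥ L`, `λ > 0`, the bar state
`ū = (uL + uR)/2 + (f uL - f uR)/(2λ)` satisfies
`min uL uR ≤ ū ≤ max uL uR`. -/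
theorem bar_state_max_principle (f : ℝ → ℝ) (L lam uL uR : ℝ)
    (hLip : ∀ a b : ℝ, |f a - f b| ≤ L * |a - b|)
    (hlam : L ≤ lam) (hlampos : 0 < lam) :
    min uL uR ≤ (uL + uR) / 2 + (f uL - f uR) / (2 * lam) ∧
    (uL + uR) / 2 + (f uL - f uR) / (2 * lam) ≤ max uL uR := by
  have h := hLip uL uR
  have h2 : |f uL - f uR| ≤ lam * |uL - uR| := by
    calc |f uL - f uR| ≤ L * |uL - uR| := h
      _ ≤ lam * |uL - uR| := by
        have := abs_nonneg (uL - uR); nlinarith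
  have habs := abs_le.mp h2
  have hc : f uL - f uR = ((f uL - f uR) / (2 * lam)) * (2 * lam) := by
    field_simp
  set c := (f uL - f uR) / (2 * lam) with hcdef
  rw [hc] at habs
  rcases abs_cases (uL - uR) with ⟨he, hs⟩ | ⟨he, hs⟩ <;> rw [he] at habs <;>
    obtain ⟨h1, h2'⟩ := habs
  · have hcu : c ≤ (uL - uR) / 2 := by nlinarith
    have hcl : -((uL - uR) / 2) ≤ c := by nlinarith
    constructor
    · calc min uL uR ≤ uR := min_le_right _ _
        _ ≤ (uL + uR) / 2 + c := by linarith
    · calc (uL + uR) / 2 + c ≤ uL := by linarith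
        _ ≤ max uL uR := le_max_left _ _
  · have hcu : c ≤ (uR - uL) / 2 := by nlinarith
    have hcl : -((uR - uL) / 2) ≤ c := by nlinarith
    constructor
    · calc min uL uR ≤ uL := min_le_left _ _
        _ ≤ (uL + uR) / 2 + c := by linarith
    · calc (uL + uR) / 2 + c ≤ uR := by linarith
        _ ≤ max uL uR := le_max_right _ _
end

section
/- Symmetric sparsification identity: if the two-point volume fluxes f*_{(i,m)} are symmetric (f*_{(i,m)} = f*_{(m,i)}) and consistent, and the internal fluxes are defined by f^DG_{(i,i+1)} = -∑_{l=0}^{i} F_l with F_l = -∑_{m} S_{lm} f*_{(l,m)} for a skew-symmetric matrix core S (S_{lm} = -S_{ml} for interior entries), then f^DG_{(i,i+1)} = ∑_{l ≤ i} ∑_{m > i} S_{lm} f*_{(l,m)}, i.e., the interface flux only involves pairs of points straddling the interface. -/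
/-- Symmetric sparsification identity: for a skew-symmetric matrix `S` and
symmetric two-point fluxes `f*`, the flux-differencing interface flux
`f^DG i = -∑_{l ≤ i} F l` with `F l = -∑_m S l m • f* l m` equals the sum over
pairs straddling the interface. -/
theorem symmetric_sparsification (N d : ℕ) (hN : 1 ≤ N)
    (S : Matrix (Fin (N + 1)) (Fin (N + 1)) ℝ)
    (hS : ∀ l m, S l m = -S m l)
    (fstar : Fin (N + 1) → Fin (N + 1) → EuclideanSpace ℝ (Fin d))
    (hsym : ∀ l m, fstar l m = fstar m l)
    (F : Fin (N + 1) → EuclideanSpace ℝ (Fin d))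
    (hF : ∀ l, F l = -∑ m : Fin (N + 1), S l m • fstar l m)
    (fDG : Fin (N + 1) → EuclideanSpace ℝ (Fin d))
    (hfDG : ∀ i, fDG i = -∑ l ∈ Finset.univ.filter (· ≤ i), F l) :
    ∀ i : Fin (N + 1), (i : ℕ) ≤ N - 1 →
      fDG i = ∑ l ∈ Finset.univ.filter (· ≤ i),
        ∑ m ∈ Finset.univ.filter (fun m => i < m), S l m • fstar l m := by
  intro i _
  classical
  have hsplit : (Finset.univ : Finset (Fin (N + 1))) =
      Finset.univ.filter (· ≤ i) ∪ Finset.univ.filter (fun m => i < m) := by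
    ext m
    simp [le_or_gt]
  have hdisj : Disjoint (Finset.univ.filter (· ≤ i))
      (Finset.univ.filter (fun m => i < m)) := by
    simp [Finset.disjoint_filter]
  have key : fDG i =
      ∑ l ∈ Finset.univ.filter (· ≤ i), ∑ m : Fin (N + 1), S l m • fstar l m := by
    rw [hfDG, ← Finset.sum_neg_distrib]
    refine Finset.sum_congr rfl fun l _ => ?_
    rw [hF]; simp
  rw [key]
  have hzero : ∑ l ∈ Finset.univ.filter (· ≤ i),
      ∑ m ∈ Finset.univ.filter (· ≤ i), S l m • fstar l m = 0 := by
    set T := ∑ l ∈ Finset.univ.filter (· ≤ i),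
      ∑ m ∈ Finset.univ.filter (· ≤ i), S l m • fstar l m with hT
    have hswap : T = ∑ m ∈ Finset.univ.filter (· ≤ i),
        ∑ l ∈ Finset.univ.filter (· ≤ i), S l m • fstar l m := Finset.sum_comm
    have : T = -T := by
      nth_rewrite 2 [hswap]
      rw [← Finset.sum_neg_distrib]
      refine Finset.sum_congr rfl fun l _ => ?_
      rw [← Finset.sum_neg_distrib]
      refine Finset.sum_congr rfl fun m _ => ?_
      rw [hS m l, hsym l m]
      simp
    have h2 : (2 : ℝ) • T = 0 := by
      rw [two_smul]
      nth_rewrite 2 [this]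
      simp
    simpa using (smul_eq_zero.mp h2).resolve_left (by norm_num)
  have hfinal : ∑ l ∈ Finset.univ.filter (· ≤ i), ∑ m : Fin (N + 1), S l m • fstar l m =
      ∑ l ∈ Finset.univ.filter (· ≤ i),
        (∑ m ∈ Finset.univ.filter (· ≤ i), S l m • fstar l m
          + ∑ m ∈ Finset.univ.filter (fun m => i < m), S l m • fstar l m) := by
    refine Finset.sum_congr rfl fun l _ => ?_
    rw [← Finset.sum_union hdisj, ← hsplit]
  rw [hfinal, Finset.sum_add_distrib, hzero, zero_add]
end

section
/- The forward Euler step of the first-order FV scheme with local Lax-Friedrichs flux in 1D is a convex combination of the previous state and the bar states, provided the CFL condition Δt·λ·(1/(J_i ω_i))·2 ≤ 1 holds; consequently, u_i^{n+1} lies in the convex hull of {u_i^n, ū_{(i-1,i)}, ū_{(i,i+1)}}. -/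
/-- The FV-LLF forward Euler step is a convex combination of the previous
state and the bar states under the CFL condition `2·Δt·λ ≤ Jω`. -/
theorem fv_llf_convex_combination (f : ℝ → ℝ) (uL u uR lam dt Jω : ℝ)
    (hlam : 0 < lam) (hdt : 0 < dt) (hJω : 0 < Jω)
    (hCFL : 2 * dt * lam ≤ Jω) :
    let fhat : ℝ → ℝ → ℝ := fun a b => (f a + f b) / 2 - lam / 2 * (b - a)
    let ubar : ℝ → ℝ → ℝ := fun a b => (a + b) / 2 + (f a - f b) / (2 * lam)
    let unext := u + dt / Jω * (fhat uL u - fhat u uR)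
    unext = (1 - 2 * dt * lam / Jω) * u
        + (dt * lam / Jω) * ubar uL u + (dt * lam / Jω) * ubar u uR ∧
    unext ∈ convexHull ℝ {u, ubar uL u, ubar u uR} := by
  intro fhat ubar unext
  have heq : unext = (1 - 2 * dt * lam / Jω) * u
      + (dt * lam / Jω) * ubar uL u + (dt * lam / Jω) * ubar u uR := by
    simp only [unext, fhat, ubar]
    field_simp
    ring
  refine ⟨heq, ?_⟩
  have hconv : Convex ℝ (convexHull ℝ ({u, ubar uL u, ubar u uR} : Set ℝ)) :=
    convex_convexHull ℝ _
  have hu : u ∈ convexHull ℝ ({u, ubar uL u, ubar u uR} : Set ℝ) :=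
    subset_convexHull ℝ _ (by simp)
  have ha : ubar uL u ∈ convexHull ℝ ({u, ubar uL u, ubar u uR} : Set ℝ) :=
    subset_convexHull ℝ _ (by simp)
  have hb : ubar u uR ∈ convexHull ℝ ({u, ubar uL u, ubar u uR} : Set ℝ) :=
    subset_convexHull ℝ _ (by simp)
  have ht : 0 ≤ dt * lam / Jω := by positivity
  have hm : (1/2 : ℝ) • ubar uL u + (1/2 : ℝ) • ubar u uR
      ∈ convexHull ℝ ({u, ubar uL u, ubar u uR} : Set ℝ) :=
    hconv ha hb (by norm_num) (by norm_num) (by norm_num)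
  have := hconv hu hm (a := 1 - 2 * dt * lam / Jω) (b := 2 * dt * lam / Jω)
    (by rw [sub_nonneg, div_le_one hJω]; exact hCFL) (by positivity) (by ring)
  rw [heq]
  convert this using 1
  simp [smul_eq_mul]
  ring
end
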